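/- arXiv:1804.03059 — 4 statements merged into one kernel-verified Lean document; each statement's English description precedes it below -/
import Mathlib

section
/- Let 0 < α < 2 and set c = (2−α)/2. Let Û : S^{M−1} → (0,∞) and define U(q) = |q|^{−α} · Û(q/|q|) for q ≠ 0. Let r : (a,b) → (0,∞) and s : (a,b) → S^{M−1} be differentiable, let q(t) = r(t)·s(t), and set ρ(t) = (1/c) · r(t)^{c}. Then for every t ∈ (a,b): 2·U(q(t))·|q'(t)|² = 2·Û(s(t)) · ( ρ'(t)² + c²·ρ(t)²·|s'(t)|² ). (Here one uses that |q'|² = r'² + r²|s'|², since ⟨s(t), s'(t)⟩ = 0 for a curve on the unit sphere.) In other words, the zero-energy JM metric of a potential homogeneous of degree −α, 0 < α < 2, is conformal—with conformal factor the shape potential Û—to the metric of the cone over the sphere of radius c(α) = (2−α)/2 < 1. -/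
open MeasureTheory Set

noncomputable section

/-- conical normal form of the zero-energy JM metric for a
homogeneous potential `U(q) = |q|^{-α} Û(q/|q|)`, `0 < α < 2`.  If
`q(t) = r(t) • s(t)` with `r > 0` and `s` on the unit sphere, and
`ρ = (1/c) r^c` with `c = (2-α)/2`, then
`2 U(q) |q'|² = 2 Û(s) (ρ'² + c² ρ² |s'|²)` :
the JM metric is conformal, with conformal factor `Û`, to the metric of the
cone over the sphere of radius `c(α) = (2-α)/2 < 1`. -/
theorem jm_metric_conical_normal_form {M : ℕ} {α : ℝ} (hα : 0 < α) (hα2 : α < 2)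
    (c : ℝ) (hc : c = (2 - α)/2)
    (Uhat : EuclideanSpace ℝ (Fin M) → ℝ)
    (U : EuclideanSpace ℝ (Fin M) → ℝ)
    (hU : ∀ q : EuclideanSpace ℝ (Fin M), q ≠ 0 →
      U q = ‖q‖ ^ (-α) * Uhat (‖q‖⁻¹ • q))
    (a b : ℝ) (r : ℝ → ℝ) (s : ℝ → EuclideanSpace ℝ (Fin M))
    (hr : ∀ t ∈ Set.Ioo a b, 0 < r t)
    (hs : ∀ t ∈ Set.Ioo a b, ‖s t‖ = 1) :
    ∀ t ∈ Set.Ioo a b,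
      ∀ (r' : ℝ) (s' : EuclideanSpace ℝ (Fin M)) (q' : EuclideanSpace ℝ (Fin M)) (ρ' : ℝ),
        HasDerivAt r r' t →
        HasDerivAt s s' t →
        HasDerivAt (fun τ => r τ • s τ) q' t →
        HasDerivAt (fun τ => (1/c) * r τ ^ c) ρ' t →
        2 * U (r t • s t) * ‖q'‖ ^ 2
          = 2 * Uhat (s t) *
              (ρ' ^ 2 + c ^ 2 * ((1/c) * r t ^ c) ^ 2 * ‖s'‖ ^ 2) := by
  intro t ht r' s' q' ρ' hdr hds hdq hdρ
  have hrt : 0 < r t := hr t ht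
  have hst : ‖s t‖ = 1 := hs t ht
  have hc0 : 0 < c := by rw [hc]; linarith
  set R := r t with hR
  -- q' value
  have hq' : q' = r' • s t + r t • s' :=
    hdq.unique (by rw [add_comm]; exact hdr.smul hds)
  -- ρ' value
  have hdρ2 : HasDerivAt (fun τ => (1/c) * r τ ^ c)
      ((1/c) * (r' * c * R ^ (c - 1))) t :=
    (hdr.rpow_const (Or.inl hrt.ne')).const_mul (1/c)
  have hcne : c ≠ 0 := hc0.ne'
  have hρ' : ρ' = r' * R ^ (c - 1) := by
    rw [hdρ.unique hdρ2]; field_simp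
  -- orthogonality of s and s'
  have horth : (inner ℝ (s t) s' : ℝ) = 0 := by
    have hconst : (fun τ => (inner ℝ (s τ) (s τ) : ℝ)) =ᶠ[nhds t] fun _ => 1 := by
      filter_upwards [Ioo_mem_nhds ht.1 ht.2] with τ hτ
      rw [real_inner_self_eq_norm_sq, hs τ hτ]; norm_num
    have hd1 : HasDerivAt (fun τ => (inner ℝ (s τ) (s τ) : ℝ))
        ((inner ℝ (s t) s' : ℝ) + (inner ℝ s' (s t) : ℝ)) t := hds.inner ℝ hds
    have hd0 : HasDerivAt (fun τ => (inner ℝ (s τ) (s τ) : ℝ)) 0 t := by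
      exact (hasDerivAt_const t (1:ℝ)).congr_of_eventuallyEq hconst
    have h0 := hd0.unique hd1
    have hsym := real_inner_comm (s t) s'
    linarith
  -- norm of q'
  have hq'norm : ‖q'‖ ^ 2 = r' ^ 2 + R ^ 2 * ‖s'‖ ^ 2 := by
    rw [hq', norm_add_sq_real, norm_smul, norm_smul, real_inner_smul_left,
      real_inner_smul_right, horth, hst]
    simp [abs_of_pos hrt, mul_pow, ← hR]
  -- U value
  have hUval : U (r t • s t) = R ^ (-α) * Uhat (s t) := by
    have hq0 : r t • s t ≠ 0 := by
      intro h
      have : ‖r t • s t‖ = 0 := by rw [h, norm_zero]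
      rw [norm_smul, hst, Real.norm_of_nonneg hrt.le] at this
      rw [mul_one] at this
      exact hrt.ne' this
    rw [hU _ hq0, norm_smul, hst, Real.norm_of_nonneg hrt.le]
    simp only [mul_one, ← hR]
    congr 1
    rw [inv_smul_smul₀ hrt.ne']
  -- rpow identities
  have h1 : (R ^ (c - 1)) ^ 2 = R ^ (-α) := by
    rw [sq, ← Real.rpow_add hrt]
    congr 1; rw [hc]; ring
  have h2 : (R ^ c) ^ 2 = R ^ (-α) * R ^ 2 := by
    rw [sq, ← Real.rpow_add hrt, ← Real.rpow_natCast R 2, ← Real.rpow_add hrt]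
    congr 1; push_cast; rw [hc]; ring
  rw [hUval, hq'norm, hρ']
  field_simp
  rw [h1, h2]
  ring
end
end

section
/- Let U : ℝ^M → ℝ be continuous with U(x) > 0 for all x. Then for all p, q ∈ ℝ^M, the infimum of the zero-energy Jacobi–Maupertuis lengths ℓ₀(γ) over all absolutely continuous curves γ : [0,1] → ℝ^M with γ(0) = p and γ(1) = q equals the infimum of the actions A(σ) over all T > 0 and all absolutely continuous curves σ : [0,T] → ℝ^M with σ(0) = p and σ(T) = q. In other words, minimizing the zero-energy JM length between two points is the same problem as free-time action minimization between those points. -/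
open MeasureTheory Set
open scoped ENNReal

noncomputable section

/-- `γ` is absolutely continuous on `[a,b]` with (a.e.) derivative `g`. -/
def IsACOn {M : ℕ} (γ g : ℝ → EuclideanSpace ℝ (Fin M)) (a b : ℝ) : Prop :=
  IntervalIntegrable g volume a b ∧
    ∀ t ∈ Set.Icc a b, γ t = γ a + ∫ s in a..t, g s

/-- Zero-energy Jacobi–Maupertuis length (extended-real valued). -/
def jmLength0 {M : ℕ} (U : EuclideanSpace ℝ (Fin M) → ℝ)
    (γ g : ℝ → EuclideanSpace ℝ (Fin M)) (a b : ℝ) : ℝ≥0∞ :=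
  ∫⁻ t in Set.Icc a b, ENNReal.ofReal (Real.sqrt (2 * U (γ t)) * ‖g t‖)

/-- The action (extended-real valued). -/
def action {M : ℕ} (U : EuclideanSpace ℝ (Fin M) → ℝ)
    (γ g : ℝ → EuclideanSpace ℝ (Fin M)) (a b : ℝ) : ℝ≥0∞ :=
  ∫⁻ t in Set.Icc a b, ENNReal.ofReal (‖g t‖ ^ 2 / 2 + U (γ t))

namespace JMAux
variable {M : ℕ}
def actSet (U : EuclideanSpace ℝ (Fin M) → ℝ) (p q : EuclideanSpace ℝ (Fin M)) : Set ℝ≥0∞ :=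
  {A : ℝ≥0∞ | ∃ T : ℝ, 0 < T ∧ ∃ σ g : ℝ → EuclideanSpace ℝ (Fin M),
      IsACOn σ g 0 T ∧ σ 0 = p ∧ σ T = q ∧ A = action U σ g 0 T}

lemma amgm (a u : ℝ) (ha : 0 ≤ a) (hu : 0 ≤ u) :
    Real.sqrt (2 * u) * a ≤ a ^ 2 / 2 + u := by
  nlinarith [Real.sq_sqrt (by linarith : (0:ℝ) ≤ 2 * u), sq_nonneg (a - Real.sqrt (2 * u)),
    Real.sqrt_nonneg (2 * u)]

lemma seg_arith (r s δ Mc T : ℝ) (hr0 : 0 ≤ r) (hs0 : 0 < s) (hT0 : 0 < T)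
    (hδ : 0 < δ) (hs2 : s ^ 2 = 2 * Mc) (hTs : T * s = r + δ * s) :
    T * ((r / T) ^ 2 / 2 + Mc) ≤ r * s + δ * Mc := by
  have expand : T * ((r / T) ^ 2 / 2 + Mc) = r ^ 2 / (2 * T) + T * Mc := by
    field_simp
  rw [expand]
  have h1 : r ^ 2 / (2 * T) ≤ r * s / 2 := by
    rw [div_le_iff₀ (by positivity)]
    have h0 : r * (T * s) = r * (r + δ * s) := by rw [hTs]
    nlinarith [h0, mul_nonneg (mul_nonneg hr0 hδ.le) hs0.le]
  have h2 : T * Mc = r * s / 2 + δ * Mc := by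
    linear_combination (s / 2) * hTs - ((T - δ) / 2) * hs2
  linarith

lemma seg_le (U : EuclideanSpace ℝ (Fin M) → ℝ) (p q : EuclideanSpace ℝ (Fin M))
    (Mc δ : ℝ) (hM : 0 < Mc) (hδ : 0 < δ)
    (hseg : ∀ x ∈ segment ℝ p q, U x ≤ Mc) :
    sInf (actSet U p q) ≤ ENNReal.ofReal (‖q - p‖ * Real.sqrt (2 * Mc) + δ * Mc) := by
  set s := Real.sqrt (2 * Mc) with hs
  have hs0 : 0 < s := Real.sqrt_pos.2 (by linarith)
  have hs2 : s ^ 2 = 2 * Mc := Real.sq_sqrt (by linarith)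
  set r := ‖q - p‖ with hr
  have hr0 : 0 ≤ r := norm_nonneg _
  set T := r / s + δ with hT
  have hT0 : 0 < T := by positivity
  set v : EuclideanSpace ℝ (Fin M) := T⁻¹ • (q - p) with hv
  set σ : ℝ → EuclideanSpace ℝ (Fin M) := fun t => p + t • v with hσ
  have hAC : IsACOn σ (fun _ => v) 0 T := by
    refine ⟨intervalIntegrable_const, fun t ht => ?_⟩
    show p + t • v = p + (0:ℝ) • v + ∫ _ in (0:ℝ)..t, v
    rw [intervalIntegral.integral_const, zero_smul, add_zero, sub_zero]
  have hσ0 : σ 0 = p := by simp [hσ]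
  have hσT : σ T = q := by
    simp only [hσ, hv, smul_smul, mul_inv_cancel₀ hT0.ne', one_smul]
    abel
  have hmem : action U σ (fun _ => v) 0 T ∈ actSet U p q :=
    ⟨T, hT0, σ, _, hAC, hσ0, hσT, rfl⟩
  refine le_trans (sInf_le hmem) ?_
  have hvn : ‖v‖ = r / T := by
    rw [hv, norm_smul, norm_inv, Real.norm_eq_abs, abs_of_pos hT0, ← hr, div_eq_inv_mul]
  have hmemseg : ∀ t ∈ Icc (0:ℝ) T, σ t ∈ segment ℝ p q := by
    intro t ht
    rw [segment_eq_image']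
    refine ⟨t / T, ⟨div_nonneg ht.1 hT0.le, by
      rw [div_le_one hT0]; exact ht.2⟩, ?_⟩
    simp only [hσ, hv, smul_smul]
    rw [div_eq_mul_inv]
  calc action U σ (fun _ => v) 0 T
      ≤ ∫⁻ _ in Icc (0:ℝ) T, ENNReal.ofReal (‖v‖ ^ 2 / 2 + Mc) := by
        simp only [action]
        refine setLIntegral_mono' measurableSet_Icc fun t ht => ?_
        exact ENNReal.ofReal_le_ofReal (by
          have := hseg _ (hmemseg t ht); linarith)
    _ = ENNReal.ofReal (‖v‖ ^ 2 / 2 + Mc) * volume (Icc (0:ℝ) T) := setLIntegral_const _ _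
    _ = ENNReal.ofReal (T * (‖v‖ ^ 2 / 2 + Mc)) := by
        rw [Real.volume_Icc, sub_zero, ← ENNReal.ofReal_mul (by positivity), mul_comm]
    _ ≤ ENNReal.ofReal (r * s + δ * Mc) := by
        apply ENNReal.ofReal_le_ofReal
        rw [hvn]
        refine seg_arith r s δ Mc T hr0 hs0 hT0 hδ hs2 ?_
        rw [hT, add_mul, div_mul_cancel₀ _ hs0.ne']

lemma glue_le (U : EuclideanSpace ℝ (Fin M) → ℝ) (p r q : EuclideanSpace ℝ (Fin M))
    {T₁ T₂ : ℝ} (hT₁ : 0 < T₁) (hT₂ : 0 < T₂)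
    {σ₁ h₁ σ₂ h₂ : ℝ → EuclideanSpace ℝ (Fin M)}
    (hAC₁ : IsACOn σ₁ h₁ 0 T₁) (h10 : σ₁ 0 = p) (h1T : σ₁ T₁ = r)
    (hAC₂ : IsACOn σ₂ h₂ 0 T₂) (h20 : σ₂ 0 = r) (h2T : σ₂ T₂ = q) :
    sInf (actSet U p q) ≤ action U σ₁ h₁ 0 T₁ + action U σ₂ h₂ 0 T₂ := by
  classical
  set T := T₁ + T₂ with hTdef
  have hT1T : T₁ ≤ T := by linarith
  set h : ℝ → EuclideanSpace ℝ (Fin M) := fun t => if t ≤ T₁ then h₁ t else h₂ (t - T₁) with hh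
  -- integrability pieces
  have I1 : IntervalIntegrable h volume 0 T₁ := by
    rw [intervalIntegrable_iff_integrableOn_Ioc_of_le hT₁.le]
    exact ((intervalIntegrable_iff_integrableOn_Ioc_of_le hT₁.le).1 hAC₁.1).congr_fun
      (fun t ht => by simp [hh, ht.2]) measurableSet_Ioc
  have I2 : IntervalIntegrable h volume T₁ T := by
    rw [intervalIntegrable_iff_integrableOn_Ioc_of_le hT1T]
    have h2i := (hAC₂.1.comp_sub_right T₁)
    rw [zero_add] at h2i
    have h2i' : IntegrableOn (fun x => h₂ (x - T₁)) (Ioc T₁ T) volume := by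
      have := (intervalIntegrable_iff_integrableOn_Ioc_of_le (by linarith :
        T₁ ≤ T₂ + T₁)).1 h2i
      simpa [hTdef, add_comm] using this
    exact h2i'.congr_fun (fun t ht => by simp [hh, not_le.2 ht.1]) measurableSet_Ioc
  have I : IntervalIntegrable h volume 0 T := I1.trans I2
  set σ : ℝ → EuclideanSpace ℝ (Fin M) := fun t => p + ∫ s in (0:ℝ)..t, h s with hσ
  have hσ0 : σ 0 = p := by simp [hσ]
  have hAC : IsACOn σ h 0 T := by
    refine ⟨I, fun t ht => ?_⟩
    simp [hσ]
  have hlow : ∀ t ∈ Icc (0:ℝ) T₁, σ t = σ₁ t := by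
    intro t ht
    have hcongr : ∫ s in (0:ℝ)..t, h s = ∫ s in (0:ℝ)..t, h₁ s := by
      refine intervalIntegral.integral_congr fun s hs => ?_
      rw [uIcc_of_le ht.1] at hs
      simp [hh, le_trans hs.2 ht.2]
    rw [hσ]
    simp only [hcongr]
    rw [hAC₁.2 t ht, h10]
  have hσT₁ : σ T₁ = r := by rw [hlow T₁ ⟨hT₁.le, le_refl _⟩, h1T]
  have hupp : ∀ t ∈ Icc T₁ T, σ t = σ₂ (t - T₁) := by
    intro t ht
    have hI2t : IntervalIntegrable h volume T₁ t := by
      refine I2.mono_set ?_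
      rw [uIcc_of_le ht.1, uIcc_of_le hT1T]
      exact Icc_subset_Icc le_rfl ht.2
    have hsplit : ∫ s in (0:ℝ)..t, h s = (∫ s in (0:ℝ)..T₁, h s) + ∫ s in T₁..t, h s :=
      (intervalIntegral.integral_add_adjacent_intervals I1 hI2t).symm
    have hshift : ∫ s in T₁..t, h s = ∫ s in T₁..t, h₂ (s - T₁) := by
      refine intervalIntegral.integral_congr_ae ?_
      refine Filter.Eventually.of_forall fun s hs' => ?_
      rw [uIoc_of_le ht.1] at hs'
      simp [hh, not_le.2 hs'.1]
    have hcv : ∫ s in T₁..t, h₂ (s - T₁) = ∫ s in (0:ℝ)..(t - T₁), h₂ s := by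
      rw [intervalIntegral.integral_comp_sub_right _ T₁, sub_self]
    have h2form := hAC₂.2 (t - T₁) ⟨by linarith [ht.1], by
      have := ht.2; rw [hTdef] at this; linarith⟩
    rw [hσ]
    simp only [hsplit, hshift, hcv]
    have hfirst : (∫ s in (0:ℝ)..T₁, h s) = r - p := by
      have := hσT₁
      rw [hσ] at this
      have := congrArg (fun x => x - p) this
      simpa using this
    rw [hfirst, h2form, h20]
    abel
  have hσT : σ T = q := by
    rw [hupp T ⟨hT1T, le_refl _⟩]
    have : T - T₁ = T₂ := by rw [hTdef]; ring
    rw [this, h2T]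
  -- action bound
  have hsplit : action U σ h 0 T
      = (∫⁻ t in Icc (0:ℝ) T₁, ENNReal.ofReal (‖h t‖ ^ 2 / 2 + U (σ t)))
        + ∫⁻ t in Ioc T₁ T, ENNReal.ofReal (‖h t‖ ^ 2 / 2 + U (σ t)) := by
    rw [action, ← lintegral_union measurableSet_Ioc
      (Disjoint.mono_left Icc_subset_Iic_self (Iic_disjoint_Ioc le_rfl)),
      Icc_union_Ioc_eq_Icc hT₁.le hT1T]
  have hpart1 : (∫⁻ t in Icc (0:ℝ) T₁, ENNReal.ofReal (‖h t‖ ^ 2 / 2 + U (σ t)))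
      = action U σ₁ h₁ 0 T₁ := by
    rw [action]
    refine setLIntegral_congr_fun measurableSet_Icc (fun t ht => ?_)
    rw [hlow t ht]
    simp [hh, ht.2]
  have hpart2 : (∫⁻ t in Ioc T₁ T, ENNReal.ofReal (‖h t‖ ^ 2 / 2 + U (σ t)))
      ≤ action U σ₂ h₂ 0 T₂ := by
    have hcongr : (∫⁻ t in Ioc T₁ T, ENNReal.ofReal (‖h t‖ ^ 2 / 2 + U (σ t)))
        = ∫⁻ t in Ioc T₁ T, ENNReal.ofReal (‖h₂ (t - T₁)‖ ^ 2 / 2 + U (σ₂ (t - T₁))) := by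
      refine setLIntegral_congr_fun measurableSet_Ioc
        (fun t ht => ?_)
      rw [hupp t ⟨ht.1.le, ht.2⟩]
      simp [hh, not_le.2 ht.1]
    rw [hcongr]
    -- translate
    have hemb : MeasurableEmbedding (fun x : ℝ => x + T₁) :=
      (Homeomorph.addRight T₁).measurableEmbedding
    have hpre : (Ioc (0:ℝ) T₂) = (fun x : ℝ => x + T₁) ⁻¹' (Ioc T₁ T) := by
      ext x
      simp only [mem_preimage, mem_Ioc, hTdef]
      constructor
      · rintro ⟨a, b⟩; exact ⟨by linarith, by linarith⟩
      · rintro ⟨a, b⟩; exact ⟨by linarith, by linarith⟩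
    have hmap : Measure.map (fun x : ℝ => x + T₁) (volume.restrict (Ioc 0 T₂))
        = volume.restrict (Ioc T₁ T) := by
      rw [hpre, ← Measure.restrict_map hemb.measurable measurableSet_Ioc,
        (measurePreserving_add_right volume T₁).map_eq]
    rw [← hmap, hemb.lintegral_map]
    simp only [add_sub_cancel_right]
    rw [action]
    exact lintegral_mono_set Ioc_subset_Icc_self
  have hfinal : action U σ h 0 T ≤ action U σ₁ h₁ 0 T₁ + action U σ₂ h₂ 0 T₂ := by
    rw [hsplit, hpart1]
    exact add_le_add_right hpart2 _
  exact le_trans (sInf_le ⟨T, by linarith, σ, h, hAC, hσ0, hσT, rfl⟩) hfinal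


lemma tri (U : EuclideanSpace ℝ (Fin M) → ℝ) (p r q : EuclideanSpace ℝ (Fin M)) :
    sInf (actSet U p q) ≤ sInf (actSet U p r) + sInf (actSet U r q) := by
  by_cases h1 : sInf (actSet U p r) = ⊤
  · simp [h1]
  by_cases h2 : sInf (actSet U r q) = ⊤
  · simp [h2]
  refine ENNReal.le_of_forall_pos_le_add fun ε hε hfin => ?_
  have hε2 : ((ε : ℝ≥0∞) / 2) ≠ 0 := by
    simp [ENNReal.div_eq_zero_iff, hε.ne']
  obtain ⟨A₁, hA₁mem, hA₁⟩ := sInf_lt_iff.1 (ENNReal.lt_add_right h1 hε2)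
  obtain ⟨A₂, hA₂mem, hA₂⟩ := sInf_lt_iff.1 (ENNReal.lt_add_right h2 hε2)
  obtain ⟨T₁, hT₁, σ₁, g₁, hAC₁, h10, h1T, rfl⟩ := hA₁mem
  obtain ⟨T₂, hT₂, σ₂, g₂, hAC₂, h20, h2T, rfl⟩ := hA₂mem
  calc sInf (actSet U p q) ≤ action U σ₁ g₁ 0 T₁ + action U σ₂ g₂ 0 T₂ :=
        glue_le U p r q hT₁ hT₂ hAC₁ h10 h1T hAC₂ h20 h2T
    _ ≤ (sInf (actSet U p r) + (ε : ℝ≥0∞) / 2) + (sInf (actSet U r q) + (ε : ℝ≥0∞) / 2) :=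
        add_le_add hA₁.le hA₂.le
    _ = sInf (actSet U p r) + sInf (actSet U r q) + ε := by
        rw [add_add_add_comm, ENNReal.add_halves]


lemma easy (U : EuclideanSpace ℝ (Fin M) → ℝ) (hUpos : ∀ x, 0 < U x)
    (p q : EuclideanSpace ℝ (Fin M)) {T : ℝ} (hT : 0 < T)
    {σ g : ℝ → EuclideanSpace ℝ (Fin M)}
    (hAC : IsACOn σ g 0 T) (hσ0 : σ 0 = p) (hσT : σ T = q) :
    ∃ γ g' : ℝ → EuclideanSpace ℝ (Fin M), IsACOn γ g' 0 1 ∧ γ 0 = p ∧ γ 1 = q ∧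
      jmLength0 U γ g' 0 1 ≤ action U σ g 0 T := by
  refine ⟨fun t => σ (T * t), fun t => T • g (T * t), ⟨?_, ?_⟩, ?_, ?_, ?_⟩
  · have h1 := (hAC.1.comp_mul_left (c := T))
    rw [zero_div, div_self hT.ne'] at h1
    exact h1.smul T
  · intro t ht
    have hmem : T * t ∈ Icc 0 T := ⟨mul_nonneg hT.le ht.1, by nlinarith [ht.2]⟩
    have h2 := hAC.2 (T * t) hmem
    simp only [mul_zero]
    rw [h2]
    congr 1
    rw [intervalIntegral.integral_smul, intervalIntegral.smul_integral_comp_mul_left, mul_zero]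
  · simp only [mul_zero, hσ0]
  · simp only [mul_one, hσT]
  · set F : ℝ → ℝ≥0∞ := fun s => ENNReal.ofReal (‖g s‖ ^ 2 / 2 + U (σ s)) with hF
    have hemb : MeasurableEmbedding (fun x : ℝ => T * x) :=
      (Homeomorph.mulLeft₀ T hT.ne').measurableEmbedding
    have step1 : jmLength0 U (fun t => σ (T * t)) (fun t => T • g (T * t)) 0 1
        ≤ ∫⁻ t in Icc (0:ℝ) 1, ENNReal.ofReal T * F (T * t) := by
      rw [jmLength0]
      refine lintegral_mono fun t => ?_
      rw [hF, ← ENNReal.ofReal_mul hT.le]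
      refine ENNReal.ofReal_le_ofReal ?_
      have hn : ‖T • g (T * t)‖ = T * ‖g (T * t)‖ := by
        rw [norm_smul, Real.norm_eq_abs, abs_of_pos hT]
      rw [hn]
      have := amgm ‖g (T * t)‖ (U (σ (T * t))) (norm_nonneg _) (hUpos _).le
      nlinarith [this, hT.le]
    have hpre : (Icc (0:ℝ) 1) = (fun x : ℝ => T * x) ⁻¹' (Icc 0 T) := by
      ext x
      simp only [mem_preimage, mem_Icc]
      constructor
      · rintro ⟨a, b⟩
        exact ⟨mul_nonneg hT.le a, by nlinarith⟩
      · rintro ⟨a, b⟩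
        constructor
        · nlinarith
        · nlinarith
    have hmap : Measure.map (fun x : ℝ => T * x) (volume.restrict (Icc 0 1))
        = ENNReal.ofReal T⁻¹ • volume.restrict (Icc 0 T) := by
      rw [hpre, ← Measure.restrict_map hemb.measurable measurableSet_Icc,
        Real.map_volume_mul_left hT.ne', abs_of_pos (inv_pos.2 hT),
        Measure.restrict_smul]
    have step2 : (∫⁻ t in Icc (0:ℝ) 1, F (T * t))
        = ENNReal.ofReal T⁻¹ * action U σ g 0 T := by
      rw [← hemb.lintegral_map, hmap, lintegral_smul_measure, action, smul_eq_mul]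
    calc jmLength0 U (fun t => σ (T * t)) (fun t => T • g (T * t)) 0 1
        ≤ ∫⁻ t in Icc (0:ℝ) 1, ENNReal.ofReal T * F (T * t) := step1
      _ = ENNReal.ofReal T * ∫⁻ t in Icc (0:ℝ) 1, F (T * t) :=
          lintegral_const_mul' _ _ ENNReal.ofReal_ne_top
      _ = ENNReal.ofReal T * (ENNReal.ofReal T⁻¹ * action U σ g 0 T) := by rw [step2]
      _ = action U σ g 0 T := by
          rw [← mul_assoc, ← ENNReal.ofReal_mul hT.le, mul_inv_cancel₀ hT.ne',
            ENNReal.ofReal_one, one_mul]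


set_option maxHeartbeats 1000000 in
lemma hard (U : EuclideanSpace ℝ (Fin M) → ℝ) (hUcont : Continuous U) (hUpos : ∀ x, 0 < U x)
    (p q : EuclideanSpace ℝ (Fin M)) {γ g : ℝ → EuclideanSpace ℝ (Fin M)}
    (hAC : IsACOn γ g 0 1) (hγ0 : γ 0 = p) (hγ1 : γ 1 = q) :
    sInf (actSet U p q) ≤ jmLength0 U γ g 0 1 := by
  classical
  set f : EuclideanSpace ℝ (Fin M) → ℝ := fun x => Real.sqrt (2 * U x) with hf
  have hfc : Continuous f := Real.continuous_sqrt.comp (continuous_const.mul hUcont)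
  have hf0 : ∀ x, 0 ≤ f x := fun x => Real.sqrt_nonneg _
  -- continuity of γ on [0,1]
  have hγc : ContinuousOn γ (Icc 0 1) := by
    have hprim : ContinuousOn (fun b => ∫ s in (0:ℝ)..b, g s) (Icc (0:ℝ) 1) := by
      have := intervalIntegral.continuousOn_primitive_interval' hAC.1
        (by rw [uIcc_of_le zero_le_one]; exact ⟨le_rfl, zero_le_one⟩)
      rwa [uIcc_of_le zero_le_one] at this
    exact ((continuousOn_const.add hprim)).congr fun t ht => hAC.2 t ht
  have hKmem : ∀ t ∈ Icc (0:ℝ) 1, γ t ∈ γ '' Icc (0:ℝ) 1 := fun t ht => mem_image_of_mem γ ht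
  set K1 : Set (EuclideanSpace ℝ (Fin M)) := Metric.cthickening 1 (γ '' Icc (0:ℝ) 1) with hK1def
  have hK1 : IsCompact K1 := (isCompact_Icc.image_of_continuousOn hγc).cthickening
  have hKsub : γ '' Icc (0:ℝ) 1 ⊆ K1 := Metric.self_subset_cthickening _
  have hfu : UniformContinuousOn f K1 :=
    hK1.uniformContinuousOn_of_continuous hfc.continuousOn
  have hγu : UniformContinuousOn γ (Icc 0 1) :=
    isCompact_Icc.uniformContinuousOn_of_continuous hγc
  -- measurability of g and γ on (0,1]
  have hgInt : IntegrableOn g (Ioc 0 1) volume :=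
    (intervalIntegrable_iff_integrableOn_Ioc_of_le zero_le_one).1 hAC.1
  have hgnormInt : IntegrableOn (fun s => ‖g s‖) (Ioc 0 1) volume := hgInt.norm
  have hγae : AEMeasurable (fun s => f (γ s)) (volume.restrict (Ioc 0 1)) :=
    ContinuousOn.aemeasurable ((hfc.comp_continuousOn hγc).mono Ioc_subset_Icc_self)
      measurableSet_Ioc
  have hgae : AEMeasurable (fun s => ‖g s‖) (volume.restrict (Ioc 0 1)) :=
    hgInt.aestronglyMeasurable.norm.aemeasurable
  have hmeas1 : AEMeasurable (fun s => ENNReal.ofReal (f (γ s) * ‖g s‖))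
      (volume.restrict (Ioc 0 1)) := (hγae.mul hgae).ennreal_ofReal
  set V : ℝ := ∫ s in Ioc (0:ℝ) 1, ‖g s‖ with hVdef
  have hV0 : 0 ≤ V := by
    rw [hVdef]; exact integral_nonneg fun s => norm_nonneg _
  have hWV : (∫⁻ s in Ioc (0:ℝ) 1, ENNReal.ofReal ‖g s‖) = ENNReal.ofReal V :=
    (MeasureTheory.ofReal_integral_eq_lintegral_ofReal hgnormInt
      (Filter.Eventually.of_forall fun s => norm_nonneg _)).symm
  have hsubInt : ∀ t ∈ Icc (0:ℝ) 1, IntervalIntegrable g volume 0 t := fun t ht =>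
    hAC.1.mono_set (by
      rw [uIcc_of_le ht.1, uIcc_of_le zero_le_one]
      exact Icc_subset_Icc le_rfl ht.2)
  -- the main ε-argument
  refine ENNReal.le_of_forall_pos_le_add fun ε hε hLfin => ?_
  have hεR : (0:ℝ) < ε := hε
  set η : ℝ := ε / (2 * V + 2) with hηdef
  have hη : 0 < η := by positivity
  -- uniform continuity constants
  obtain ⟨δ₀', hδ₀', hfδ⟩ := Metric.uniformContinuousOn_iff.1 hfu η hη
  set δ₀ : ℝ := min δ₀' 1 with hδ₀def
  have hδ₀ : 0 < δ₀ := lt_min hδ₀' one_pos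
  have hδ₀1 : δ₀ ≤ 1 := min_le_right _ _
  have hfδ' : ∀ x ∈ K1, ∀ y ∈ K1, dist x y < δ₀ → dist (f x) (f y) < η := fun x hx y hy hd =>
    hfδ x hx y hy (lt_of_lt_of_le hd (min_le_left _ _))
  obtain ⟨δ₁, hδ₁, hγδ⟩ := Metric.uniformContinuousOn_iff.1 hγu δ₀ hδ₀
  obtain ⟨n, hn⟩ := exists_nat_one_div_lt hδ₁
  set N : ℕ := n + 1 with hNdef
  have hN0 : (0:ℝ) < N := by positivity
  have hNd : 1 / (N:ℝ) < δ₁ := by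
    rw [hNdef]
    push_cast
    exact hn
  set tj : ℕ → ℝ := fun j => (j:ℝ) / N with htj
  have htj0 : tj 0 = 0 := by simp [htj]
  have htjN : tj N = 1 := by rw [htj]; exact div_self hN0.ne'
  have htj_mem : ∀ j, j ≤ N → tj j ∈ Icc (0:ℝ) 1 := fun j hj =>
    ⟨by positivity, by rw [htj, div_le_one hN0]; exact_mod_cast hj⟩
  have htj_mono : ∀ j : ℕ, tj j ≤ tj (j + 1) := fun j => by
    rw [htj, div_le_div_iff_of_pos_right hN0]
    push_cast; linarith
  have htj_diff : ∀ j : ℕ, tj (j + 1) - tj j = 1 / N := fun j => by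
    rw [htj]; push_cast; ring
  have htjnn : ∀ j : ℕ, 0 ≤ tj j := fun j => by rw [htj]; positivity
  set Mf : ℕ → ℝ := fun j => (f (γ (tj j)) + η) ^ 2 / 2 with hMf
  have hfη : ∀ j, 0 < f (γ (tj j)) + η := fun j => add_pos_of_nonneg_of_pos (hf0 _) hη
  have hMfpos : ∀ j, 0 < Mf j := fun j => by
    have := hfη j
    rw [hMf]
    positivity
  have hsqrtMf : ∀ j, Real.sqrt (2 * Mf j) = f (γ (tj j)) + η := fun j => by
    rw [hMf]
    have h1 : 2 * ((f (γ (tj j)) + η) ^ 2 / 2) = (f (γ (tj j)) + η) ^ 2 := by ring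
    rw [h1, Real.sqrt_sq (hfη j).le]
  have hclose : ∀ j, j + 1 ≤ N → dist (γ (tj (j + 1))) (γ (tj j)) < δ₀ := by
    intro j hj
    refine hγδ _ (htj_mem _ hj) _ (htj_mem _ (by omega)) ?_
    rw [Real.dist_eq, abs_of_nonneg (by linarith [htj_mono j]), htj_diff j]
    exact hNd
  have hsegb : ∀ j, j + 1 ≤ N → ∀ x ∈ segment ℝ (γ (tj j)) (γ (tj (j + 1))), U x ≤ Mf j := by
    intro j hj x hx
    rw [segment_eq_image'] at hx
    obtain ⟨θ, hθ, hxe⟩ := hx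
    have hdx : dist x (γ (tj j)) < δ₀ := by
      have h1 : dist x (γ (tj j)) ≤ dist (γ (tj (j + 1))) (γ (tj j)) := by
        rw [← hxe] at *
        rw [dist_eq_norm, add_sub_cancel_left, norm_smul, Real.norm_eq_abs,
          abs_of_nonneg hθ.1, dist_eq_norm]
        exact mul_le_of_le_one_left (norm_nonneg _) hθ.2
      exact lt_of_le_of_lt h1 (hclose j hj)
    have hγjK1 : γ (tj j) ∈ K1 := hKsub (hKmem _ (htj_mem j (by omega)))
    have hxK1 : x ∈ K1 :=
      Metric.mem_cthickening_of_dist_le x (γ (tj j)) 1 _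
        (hKmem _ (htj_mem j (by omega))) (by linarith)
    have hfx := hfδ' x hxK1 _ hγjK1 hdx
    rw [Real.dist_eq] at hfx
    have h1 : f x ≤ f (γ (tj j)) + η := by
      have := (abs_lt.1 hfx).2
      linarith
    have h2 : f x ^ 2 = 2 * U x := by
      rw [hf]
      exact Real.sq_sqrt (by nlinarith [hUpos x])
    have h3 : f x ^ 2 ≤ (f (γ (tj j)) + η) ^ 2 := by nlinarith [hf0 x]
    have h4 : U x ≤ (f (γ (tj j)) + η) ^ 2 / 2 := by linarith
    rw [hMf]
    exact h4
  have hpieceb : ∀ j, j + 1 ≤ N → ∀ s ∈ Icc (tj j) (tj (j + 1)),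
      Real.sqrt (2 * Mf j) ≤ f (γ s) + 2 * η := by
    intro j hj s hs
    have hsmem : s ∈ Icc (0:ℝ) 1 :=
      ⟨le_trans (htjnn j) hs.1, le_trans hs.2 (htj_mem _ hj).2⟩
    have hds : dist (tj j) s < δ₁ := by
      have habs : |tj j - s| = s - tj j := by
        rw [abs_of_nonpos (by linarith [hs.1])]
        ring
      rw [Real.dist_eq, habs]
      have := htj_diff j
      linarith [hs.2, hNd]
    have hdγ : dist (γ (tj j)) (γ s) < δ₀ := hγδ _ (htj_mem j (by omega)) _ hsmem hds
    have hfd := hfδ' _ (hKsub (hKmem _ (htj_mem j (by omega)))) _ (hKsub (hKmem _ hsmem)) hdγ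
    rw [Real.dist_eq] at hfd
    rw [hsqrtMf j]
    have := (abs_lt.1 hfd).2
    linarith
  set B : ℕ → ℝ≥0∞ := fun j => ENNReal.ofReal
    (‖γ (tj (j + 1)) - γ (tj j)‖ * Real.sqrt (2 * Mf j) + η / (N * (Mf j + 1)) * Mf j) with hB
  have hBj : ∀ j, j + 1 ≤ N → sInf (actSet U (γ (tj j)) (γ (tj (j + 1)))) ≤ B j := by
    intro j hj
    rw [hB]
    exact seg_le U _ _ (Mf j) _ (hMfpos j) (by have := hMfpos j; positivity) (hsegb j hj)
  have hchain : ∀ k, 1 ≤ k → k ≤ N → sInf (actSet U p (γ (tj k))) ≤ ∑ j ∈ Finset.range k, B j := by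
    intro k
    induction k with
    | zero => omega
    | succ m ih =>
      intro _ hkN
      by_cases hm : m = 0
      · subst hm
        rw [Finset.sum_range_one]
        have hp : p = γ (tj 0) := by rw [htj0, hγ0]
        rw [hp]
        exact hBj 0 hkN
      · have hm1 : 1 ≤ m := Nat.one_le_iff_ne_zero.2 hm
        calc sInf (actSet U p (γ (tj (m + 1))))
            ≤ sInf (actSet U p (γ (tj m))) + sInf (actSet U (γ (tj m)) (γ (tj (m + 1)))) :=
              tri U _ _ _
          _ ≤ (∑ j ∈ Finset.range m, B j) + B m :=
              add_le_add (ih hm1 (by omega)) (hBj m hkN)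
          _ = ∑ j ∈ Finset.range (m + 1), B j := (Finset.sum_range_succ _ _).symm
  have hstart : sInf (actSet U p q) ≤ ∑ j ∈ Finset.range N, B j := by
    have := hchain N (by omega) le_rfl
    rwa [htjN, hγ1] at this
  set H : ℝ → ℝ≥0∞ := fun s => ENNReal.ofReal ((f (γ s) + 2 * η) * ‖g s‖) with hH
  have hB2 : ∀ j, j + 1 ≤ N →
      B j ≤ (∫⁻ s in Ioc (tj j) (tj (j + 1)), H s) + ENNReal.ofReal (η / N) := by
    intro j hj
    rw [hB]
    refine le_trans ENNReal.ofReal_add_le (add_le_add ?_ ?_)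
    · have hdiff : γ (tj (j + 1)) - γ (tj j) = ∫ s in (tj j)..(tj (j + 1)), g s := by
        rw [hAC.2 _ (htj_mem _ hj), hAC.2 _ (htj_mem j (by omega))]
        rw [add_sub_add_left_eq_sub]
        exact intervalIntegral.integral_interval_sub_left
          (hsubInt _ (htj_mem _ hj)) (hsubInt _ (htj_mem j (by omega)))
      have hnorm : ‖γ (tj (j + 1)) - γ (tj j)‖ ≤ ∫ s in (tj j)..(tj (j + 1)), ‖g s‖ := by
        rw [hdiff]
        exact intervalIntegral.norm_integral_le_integral_norm (htj_mono j)
      have hIintsub : IntegrableOn (fun s => ‖g s‖) (Ioc (tj j) (tj (j + 1))) volume :=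
        hgnormInt.mono_set (Ioc_subset_Ioc (htjnn j) (htj_mem _ hj).2)
      have hnint : 0 ≤ ∫ s in (tj j)..(tj (j + 1)), ‖g s‖ := le_trans (norm_nonneg _) hnorm
      have hlin : ENNReal.ofReal (∫ s in (tj j)..(tj (j + 1)), ‖g s‖)
          = ∫⁻ s in Ioc (tj j) (tj (j + 1)), ENNReal.ofReal ‖g s‖ := by
        rw [intervalIntegral.integral_of_le (htj_mono j)]
        exact MeasureTheory.ofReal_integral_eq_lintegral_ofReal hIintsub
          (Filter.Eventually.of_forall fun s => norm_nonneg _)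
      calc ENNReal.ofReal (‖γ (tj (j + 1)) - γ (tj j)‖ * Real.sqrt (2 * Mf j))
          = ENNReal.ofReal (Real.sqrt (2 * Mf j)) * ENNReal.ofReal ‖γ (tj (j + 1)) - γ (tj j)‖ := by
            rw [← ENNReal.ofReal_mul (Real.sqrt_nonneg _), mul_comm]
        _ ≤ ENNReal.ofReal (Real.sqrt (2 * Mf j))
            * ∫⁻ s in Ioc (tj j) (tj (j + 1)), ENNReal.ofReal ‖g s‖ := by
            refine mul_le_mul_right ?_ _
            exact le_trans (ENNReal.ofReal_le_ofReal hnorm) (le_of_eq hlin)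
        _ = ∫⁻ s in Ioc (tj j) (tj (j + 1)),
              ENNReal.ofReal (Real.sqrt (2 * Mf j)) * ENNReal.ofReal ‖g s‖ :=
            (lintegral_const_mul' _ _ ENNReal.ofReal_ne_top).symm
        _ ≤ ∫⁻ s in Ioc (tj j) (tj (j + 1)), H s := by
            refine setLIntegral_mono' measurableSet_Ioc fun s hs => ?_
            rw [← ENNReal.ofReal_mul (Real.sqrt_nonneg _), hH]
            refine ENNReal.ofReal_le_ofReal ?_
            exact mul_le_mul_of_nonneg_right (hpieceb j hj s ⟨hs.1.le, hs.2⟩) (norm_nonneg _)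
    · refine ENNReal.ofReal_le_ofReal ?_
      rw [div_mul_eq_mul_div, div_le_div_iff₀ (by have := hMfpos j; positivity) hN0]
      nlinarith [hMfpos j, mul_pos hη hN0]
  have hsum_split : ∀ k : ℕ, (∑ j ∈ Finset.range k, ∫⁻ s in Ioc (tj j) (tj (j + 1)), H s)
      = ∫⁻ s in Ioc 0 (tj k), H s := by
    intro k
    induction k with
    | zero => simp [htj0]
    | succ m ih =>
      rw [Finset.sum_range_succ, ih,
        ← lintegral_union measurableSet_Ioc (Ioc_disjoint_Ioc_of_le le_rfl),
        Ioc_union_Ioc_eq_Ioc (htjnn m) (htj_mono m)]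
  have hmain : sInf (actSet U p q) ≤ (∫⁻ s in Ioc (0:ℝ) 1, H s) + ENNReal.ofReal η := by
    calc sInf (actSet U p q) ≤ ∑ j ∈ Finset.range N, B j := hstart
      _ ≤ ∑ j ∈ Finset.range N,
            ((∫⁻ s in Ioc (tj j) (tj (j + 1)), H s) + ENNReal.ofReal (η / N)) :=
          Finset.sum_le_sum fun j hj => hB2 j (Finset.mem_range.1 hj)
      _ = (∑ j ∈ Finset.range N, ∫⁻ s in Ioc (tj j) (tj (j + 1)), H s)
            + N * ENNReal.ofReal (η / N) := by
          rw [Finset.sum_add_distrib, Finset.sum_const, Finset.card_range, nsmul_eq_mul]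
      _ = (∫⁻ s in Ioc (0:ℝ) 1, H s) + ENNReal.ofReal η := by
          rw [hsum_split N, htjN]
          congr 1
          rw [← ENNReal.ofReal_natCast N, ← ENNReal.ofReal_mul (by positivity),
            mul_div_cancel₀ _ hN0.ne']
  have hfirst_eq : (∫⁻ s in Ioc (0:ℝ) 1, ENNReal.ofReal (f (γ s) * ‖g s‖))
      = jmLength0 U γ g 0 1 := by
    rw [jmLength0, ← Measure.restrict_congr_set Ioc_ae_eq_Icc]
  have hHsplit : (∫⁻ s in Ioc (0:ℝ) 1, H s)
      ≤ jmLength0 U γ g 0 1 + ENNReal.ofReal (2 * η * V) := by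
    have hpt : ∀ s, H s ≤ ENNReal.ofReal (f (γ s) * ‖g s‖)
        + ENNReal.ofReal (2 * η) * ENNReal.ofReal ‖g s‖ := fun s => by
      simp only [hH]
      rw [← ENNReal.ofReal_mul (by linarith)]
      have he : (f (γ s) + 2 * η) * ‖g s‖ = f (γ s) * ‖g s‖ + 2 * η * ‖g s‖ := by ring
      rw [he]
      exact ENNReal.ofReal_add_le
    calc (∫⁻ s in Ioc (0:ℝ) 1, H s)
        ≤ ∫⁻ s in Ioc (0:ℝ) 1, (ENNReal.ofReal (f (γ s) * ‖g s‖)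
            + ENNReal.ofReal (2 * η) * ENNReal.ofReal ‖g s‖) := lintegral_mono hpt
      _ = (∫⁻ s in Ioc (0:ℝ) 1, ENNReal.ofReal (f (γ s) * ‖g s‖))
            + ∫⁻ s in Ioc (0:ℝ) 1, ENNReal.ofReal (2 * η) * ENNReal.ofReal ‖g s‖ :=
          lintegral_add_left' hmeas1 _
      _ = jmLength0 U γ g 0 1 + ENNReal.ofReal (2 * η * V) := by
          rw [hfirst_eq, lintegral_const_mul' _ _ ENNReal.ofReal_ne_top, hWV,
            ← ENNReal.ofReal_mul (by linarith)]
  have harith : 2 * η * V + η ≤ (ε : ℝ) := by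
    have h1 : η * (2 * V + 2) = ε := by
      rw [hηdef]
      field_simp
    nlinarith [hη, hV0]
  calc sInf (actSet U p q) ≤ (∫⁻ s in Ioc (0:ℝ) 1, H s) + ENNReal.ofReal η := hmain
    _ ≤ (jmLength0 U γ g 0 1 + ENNReal.ofReal (2 * η * V)) + ENNReal.ofReal η :=
        add_le_add_left hHsplit _
    _ = jmLength0 U γ g 0 1 + (ENNReal.ofReal (2 * η * V) + ENNReal.ofReal η) := by
        rw [add_assoc]
    _ ≤ jmLength0 U γ g 0 1 + (ε : ℝ≥0∞) := by
        refine add_le_add_right ?_ _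
        rw [← ENNReal.ofReal_add (by positivity) hη.le]
        calc ENNReal.ofReal (2 * η * V + η) ≤ ENNReal.ofReal (ε : ℝ) :=
              ENNReal.ofReal_le_ofReal harith
          _ = (ε : ℝ≥0∞) := ENNReal.ofReal_coe_nnreal


end JMAux

/-- minimizing the zero-energy JM length between two points is the
same problem as free-time action minimization between those points: the two
infima coincide. -/
theorem jm_length_inf_eq_free_time_action_inf {M : ℕ}
    (U : EuclideanSpace ℝ (Fin M) → ℝ)
    (hUcont : Continuous U) (hUpos : ∀ x, 0 < U x)
    (p q : EuclideanSpace ℝ (Fin M)) :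
    sInf {L : ℝ≥0∞ | ∃ γ g : ℝ → EuclideanSpace ℝ (Fin M),
        IsACOn γ g 0 1 ∧ γ 0 = p ∧ γ 1 = q ∧ L = jmLength0 U γ g 0 1}
      = sInf {A : ℝ≥0∞ | ∃ T : ℝ, 0 < T ∧ ∃ σ g : ℝ → EuclideanSpace ℝ (Fin M),
        IsACOn σ g 0 T ∧ σ 0 = p ∧ σ T = q ∧ A = action U σ g 0 T} := by
  have hset : {A : ℝ≥0∞ | ∃ T : ℝ, 0 < T ∧ ∃ σ g : ℝ → EuclideanSpace ℝ (Fin M),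
        IsACOn σ g 0 T ∧ σ 0 = p ∧ σ T = q ∧ A = action U σ g 0 T} = JMAux.actSet U p q := rfl
  rw [hset]
  apply le_antisymm
  · refine le_sInf fun A hA => ?_
    obtain ⟨T, hT, σ, g, hAC, hσ0, hσT, rfl⟩ := hA
    obtain ⟨γ, g', hAC', hγ0, hγ1, hle⟩ := JMAux.easy U hUpos p q hT hAC hσ0 hσT
    exact le_trans (sInf_le ⟨γ, g', hAC', hγ0, hγ1, rfl⟩) hle
  · refine le_sInf fun L hL => ?_
    obtain ⟨γ, g, hAC, hγ0, hγ1, rfl⟩ := hL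
    exact JMAux.hard U hUcont hUpos p q hAC hγ0 hγ1
end
end

section
/- For the planar Kepler potential U(q) = 1/|q|, any zero-energy JM geodesic ending at the origin (total collision) is inextendible: concretely, for all p, q ∈ ℝ² \ {0}, there exists a piecewise continuously differentiable curve σ : [0,1] → ℝ² \ {0} with σ(0) = p, σ(1) = q whose zero-energy Jacobi–Maupertuis length satisfies ℓ₀(σ) < 2√2·(√|p| + √|q|), where 2√2·(√|p| + √|q|) is exactly the zero-energy JM length of the concatenation of the two straight radial segments from p to 0 and from 0 to q. Thus no path through the collision point 0 minimizes the zero-energy Kepler JM length between p and q. -/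
open MeasureTheory Set

noncomputable section

lemma kep_exists_sq (z : ℂ) : ∃ w : ℂ, w ^ 2 = z :=
  ⟨z ^ ((2 : ℕ) : ℂ)⁻¹, Complex.cpow_nat_inv_pow z two_ne_zero⟩

/-- `σ` is piecewise continuously differentiable on `[0,1]`: there is a
partition `0 = u 0 < u 1 < ⋯ < u n = 1` such that `σ` is `C¹` on each piece. -/
def PiecewiseC1 (σ : ℝ → EuclideanSpace ℝ (Fin 2)) : Prop :=
  ∃ (n : ℕ) (u : Fin (n + 1) → ℝ),
    StrictMono u ∧ u 0 = 0 ∧ u (Fin.last n) = 1 ∧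
    ∀ i : Fin n, ContDiffOn ℝ 1 σ (Set.Icc (u i.castSucc) (u i.succ))

/-- for the planar Kepler potential `U(q) = 1/|q|`, geodesics
ending at total collision are inextendible: between any two nonzero points
`p, q` there is a piecewise `C¹` curve avoiding the origin whose zero-energy
JM length is strictly less than `2√2(√|p| + √|q|)`, the JM length of the
concatenation of the two radial segments through the collision point `0`. -/
theorem kepler_collision_path_not_minimizing
    (p q : EuclideanSpace ℝ (Fin 2)) (hp : p ≠ 0) (hq : q ≠ 0) :
    ∃ σ : ℝ → EuclideanSpace ℝ (Fin 2),
      PiecewiseC1 σ ∧ σ 0 = p ∧ σ 1 = q ∧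
      (∀ t ∈ Set.Icc (0:ℝ) 1, σ t ≠ 0) ∧
      (∫ t in (0:ℝ)..1, Real.sqrt (2 / ‖σ t‖) * ‖deriv σ t‖)
        < 2 * Real.sqrt 2 * (Real.sqrt ‖p‖ + Real.sqrt ‖q‖) := by
  classical
  set e : ℂ ≃ₗᵢ[ℝ] EuclideanSpace ℝ (Fin 2) := Complex.orthonormalBasisOneI.repr with he
  obtain ⟨a, ha⟩ := kep_exists_sq (e.symm p)
  obtain ⟨b₀, hb₀⟩ := kep_exists_sq (e.symm q)
  have hPne : e.symm p ≠ 0 := fun h => hp (by simpa using congrArg e h)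
  have hQne : e.symm q ≠ 0 := fun h => hq (by simpa using congrArg e h)
  have hane : a ≠ 0 := by intro h; apply hPne; rw [← ha, h]; ring
  set b : ℂ := if 0 ≤ a.re * b₀.re + a.im * b₀.im then b₀ else -b₀ with hbdef
  have hb : b ^ 2 = e.symm q := by
    rw [hbdef]; split_ifs with h
    · exact hb₀
    · rw [neg_pow]; simp [hb₀]
  have hbne : b ≠ 0 := by intro h; apply hQne; rw [← hb, h]; ring
  have hs : 0 ≤ a.re * b.re + a.im * b.im := by
    rw [hbdef]; split_ifs with h
    · exact h
    · push_neg at h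
      simp only [Complex.neg_re, Complex.neg_im]
      nlinarith
  have hw : ∀ t ∈ Set.Icc (0:ℝ) 1, a + (t : ℂ) * (b - a) ≠ 0 := by
    intro t ht h
    rcases eq_or_lt_of_le ht.2 with h1 | h1
    · subst h1
      apply hbne
      push_cast at h
      linear_combination h
    · have hre := congrArg Complex.re h
      have him := congrArg Complex.im h
      simp only [Complex.add_re, Complex.mul_re, Complex.ofReal_re, Complex.ofReal_im,
        Complex.sub_re, Complex.sub_im, Complex.add_im, Complex.mul_im, Complex.zero_re,
        Complex.zero_im, zero_mul, sub_zero, add_zero] at hre him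
      have hnsq : 0 < a.re * a.re + a.im * a.im := by
        have := Complex.normSq_pos.mpr hane
        rwa [Complex.normSq_apply] at this
      have key : (1 - t) * (a.re * a.re + a.im * a.im)
          + t * (a.re * b.re + a.im * b.im) = 0 := by
        linear_combination a.re * hre + a.im * him
      nlinarith [mul_pos (by linarith : (0:ℝ) < 1 - t) hnsq, mul_nonneg ht.1 hs]
  have hderiv_w : ∀ t : ℝ, HasDerivAt (fun s : ℝ => a + (s : ℂ) * (b - a)) (b - a) t := by
    intro t
    have h0 : HasDerivAt (fun s : ℝ => (s : ℂ)) 1 t := by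
      simpa using (hasDerivAt_id t).ofReal_comp
    simpa using (h0.mul_const (b - a)).const_add a
  have hτ : ∀ t : ℝ, HasDerivAt (fun s : ℝ => (a + (s : ℂ) * (b - a)) ^ 2)
      (2 * (a + (t : ℂ) * (b - a)) * (b - a)) t := by
    intro t
    have := (hderiv_w t).mul (hderiv_w t)
    simp only [← pow_two] at this ⊢
    exact this.congr_deriv (by ring)
  have hσd : ∀ t : ℝ, HasDerivAt (fun s : ℝ => e ((a + (s : ℂ) * (b - a)) ^ 2))
      (e (2 * (a + (t : ℂ) * (b - a)) * (b - a))) t := fun t =>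
    (e.toContinuousLinearEquiv.toContinuousLinearMap.hasFDerivAt.comp_hasDerivAt t (hτ t))
  refine ⟨fun s : ℝ => e ((a + (s : ℂ) * (b - a)) ^ 2), ?_, ?_, ?_, ?_, ?_⟩
  · have h1 : ContDiff ℝ 1 (fun s : ℝ => (a + (s : ℂ) * (b - a)) ^ 2) :=
      (contDiff_const.add ((Complex.ofRealCLM.contDiff).mul contDiff_const)).pow 2
    have hct : ContDiff ℝ 1 (fun s : ℝ => e ((a + (s : ℂ) * (b - a)) ^ 2)) :=
      (e.toContinuousLinearEquiv.toContinuousLinearMap.contDiff).comp h1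
    refine ⟨1, ![0, 1], ?_, ?_, ?_, fun i => hct.contDiffOn⟩
    · rw [Fin.strictMono_iff_lt_succ]
      intro i
      fin_cases i
      norm_num
    · rfl
    · rfl
  · show e ((a + ((0:ℝ) : ℂ) * (b - a)) ^ 2) = p
    have h0 : a + ((0:ℝ) : ℂ) * (b - a) = a := by push_cast; ring
    rw [h0, ha, e.apply_symm_apply]
  · show e ((a + ((1:ℝ) : ℂ) * (b - a)) ^ 2) = q
    have h0 : a + ((1:ℝ) : ℂ) * (b - a) = b := by push_cast; ring
    rw [h0, hb, e.apply_symm_apply]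
  · intro t ht
    show e ((a + (t : ℂ) * (b - a)) ^ 2) ≠ 0
    rw [Ne, e.map_eq_zero_iff]
    exact pow_ne_zero 2 (hw t ht)
  · have hnap : ‖a‖ ^ 2 = ‖p‖ := by
      rw [← norm_pow, ha, e.symm.norm_map]
    have hnbq : ‖b‖ ^ 2 = ‖q‖ := by
      rw [← norm_pow, hb, e.symm.norm_map]
    have key : Set.EqOn
        (fun t => Real.sqrt (2 / ‖(fun s : ℝ => e ((a + (s : ℂ) * (b - a)) ^ 2)) t‖)
          * ‖deriv (fun s : ℝ => e ((a + (s : ℂ) * (b - a)) ^ 2)) t‖)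
        (fun _ => 2 * Real.sqrt 2 * ‖b - a‖) (Set.uIcc 0 1) := by
      rw [Set.uIcc_of_le zero_le_one]
      intro t ht
      have hwt : a + (t : ℂ) * (b - a) ≠ 0 := hw t ht
      have hwtn : (0:ℝ) < ‖a + (t : ℂ) * (b - a)‖ := norm_pos_iff.mpr hwt
      have hd : deriv (fun s : ℝ => e ((a + (s : ℂ) * (b - a)) ^ 2)) t
          = e (2 * (a + (t : ℂ) * (b - a)) * (b - a)) := (hσd t).deriv
      simp only [hd, e.norm_map, norm_pow, norm_mul]
      have h2 : ‖(2:ℂ)‖ = 2 := by norm_num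
      rw [h2, Real.sqrt_div (by norm_num : (0:ℝ) ≤ 2), Real.sqrt_sq hwtn.le]
      rw [div_mul_eq_mul_div, div_eq_iff hwtn.ne']
      ring
    rw [intervalIntegral.integral_congr key, intervalIntegral.integral_const]
    simp only [sub_zero, smul_eq_mul, one_mul]
    have hpp : (0:ℝ) < ‖p‖ := norm_pos_iff.mpr hp
    have hqp : (0:ℝ) < ‖q‖ := norm_pos_iff.mpr hq
    have hba2 : ‖b - a‖ ^ 2 ≤ ‖p‖ + ‖q‖ := by
      have e1 : ‖b - a‖ ^ 2 = (b.re - a.re) * (b.re - a.re) + (b.im - a.im) * (b.im - a.im) := by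
        rw [Complex.sq_norm, Complex.normSq_apply, Complex.sub_re,
          Complex.sub_im]
      have e2 : a.re * a.re + a.im * a.im = ‖p‖ := by
        rw [← hnap, Complex.sq_norm, Complex.normSq_apply]
      have e3 : b.re * b.re + b.im * b.im = ‖q‖ := by
        rw [← hnbq, Complex.sq_norm, Complex.normSq_apply]
      nlinarith [hs]
    have hlt : ‖b - a‖ < Real.sqrt ‖p‖ + Real.sqrt ‖q‖ := by
      have hsq : ‖b - a‖ ^ 2 < (Real.sqrt ‖p‖ + Real.sqrt ‖q‖) ^ 2 := by
        nlinarith [Real.sq_sqrt hpp.le, Real.sq_sqrt hqp.le,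
          mul_pos (Real.sqrt_pos.mpr hpp) (Real.sqrt_pos.mpr hqp)]
      exact lt_of_pow_lt_pow_left₀ 2 (by positivity) hsq
    have h2s : (0:ℝ) < 2 * Real.sqrt 2 := by positivity
    exact mul_lt_mul_of_pos_left hlt h2s
end
end

section
/- Let c > 0, let n : [−1,1] → [0,∞) be measurable, let e be a fixed unit vector in ℝ^M (M ≥ 2), and let ρ : [a,b] → (0,∞) and s : [a,b] → S^{M−1} be absolutely continuous. Define φ(t) = arccos⟨s(t), e⟩. Then |φ'(t)| ≤ |s'(t)| for almost every t (since ⟨s(t), s'(t)⟩ = 0 and |⟨s'(t), e − ⟨s(t),e⟩·s(t)⟩| ≤ |s'(t)|·√(1 − ⟨s(t),e⟩²)), and consequently ∫_a^b n(cos φ(t))·√(ρ'(t)² + c²·ρ(t)²·φ'(t)²) dt ≤ ∫_a^b n(⟨s(t),e⟩)·√(ρ'(t)² + c²·ρ(t)²·|s'(t)|²) dt. (This is the statement that rotating the spherical part of a curve into the half-plane spanned by e and a crossing point, keeping the radial part fixed, does not increase its length in any conical metric whose conformal factor depends only on the height ⟨s, e⟩.) -/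
open MeasureTheory Set
open scoped ENNReal

noncomputable section

/-- projecting the spherical part of a curve onto a half-plane
(i.e. replacing `s(t)` by its colatitude `φ(t) = arccos⟨s(t), e⟩`) does not
increase length in any conical metric `n²(⟨s,e⟩)(dρ² + c²ρ²ds²_sphere)` whose
conformal factor depends only on the height `⟨s,e⟩`: one has `|φ'| ≤ |s'|`
almost everywhere, and consequently the corresponding length inequality. -/
theorem projection_to_halfplane_shortens {M : ℕ} (hM : 2 ≤ M)
    (c : ℝ) (hc : 0 < c)
    (n : ℝ → ℝ) (hn : Measurable n) (hn0 : ∀ x ∈ Set.Icc (-1:ℝ) 1, 0 ≤ n x)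
    (e : EuclideanSpace ℝ (Fin M)) (he : ‖e‖ = 1)
    (a b : ℝ) (hab : a ≤ b)
    (ρ : ℝ → ℝ) (dρ : ℝ → ℝ)
    (s : ℝ → EuclideanSpace ℝ (Fin M)) (ds : ℝ → EuclideanSpace ℝ (Fin M))
    (dφ : ℝ → ℝ)
    (hρpos : ∀ t ∈ Set.Icc a b, 0 < ρ t)
    (hs1 : ∀ t ∈ Set.Icc a b, ‖s t‖ = 1)
    (hρd : ∀ᵐ t ∂(volume.restrict (Set.Icc a b)), HasDerivAt ρ (dρ t) t)
    (hsd : ∀ᵐ t ∂(volume.restrict (Set.Icc a b)), HasDerivAt s (ds t) t)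
    (hφd : ∀ᵐ t ∂(volume.restrict (Set.Icc a b)),
      HasDerivAt (fun τ => Real.arccos (inner ℝ (s τ) e : ℝ)) (dφ t) t) :
    (∀ᵐ t ∂(volume.restrict (Set.Icc a b)), |dφ t| ≤ ‖ds t‖) ∧
    (∫⁻ t in Set.Icc a b, ENNReal.ofReal
        (n (Real.cos (Real.arccos (inner ℝ (s t) e : ℝ))) *
          Real.sqrt (dρ t ^ 2 + c ^ 2 * ρ t ^ 2 * dφ t ^ 2)))
      ≤ ∫⁻ t in Set.Icc a b, ENNReal.ofReal
        (n ((inner ℝ (s t) e : ℝ)) *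
          Real.sqrt (dρ t ^ 2 + c ^ 2 * ρ t ^ 2 * ‖ds t‖ ^ 2)) := by
  have hIoo : ∀ᵐ t ∂(volume.restrict (Set.Icc a b)), t ∈ Set.Ioo a b := by
    have h2 : (volume.restrict (Set.Icc a b)) ({a, b} : Set ℝ) = 0 := by
      refine le_antisymm ?_ (by positivity)
      calc (volume.restrict (Set.Icc a b)) ({a, b} : Set ℝ)
          ≤ volume ({a, b} : Set ℝ) := Measure.restrict_le_self _
        _ = 0 := ((Set.finite_singleton b).insert a).measure_zero _
    have h3 : ∀ᵐ t ∂(volume.restrict (Set.Icc a b)), t ∉ ({a, b} : Set ℝ) :=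
      measure_eq_zero_iff_ae_notMem.mp h2
    filter_upwards [ae_restrict_mem measurableSet_Icc, h3] with t ht hab'
    simp only [Set.mem_insert_iff, Set.mem_singleton_iff, not_or] at hab'
    exact ⟨lt_of_le_of_ne ht.1 (Ne.symm hab'.1), lt_of_le_of_ne ht.2 hab'.2⟩
  have key : ∀ᵐ t ∂(volume.restrict (Set.Icc a b)), |dφ t| ≤ ‖ds t‖ := by
    filter_upwards [hsd, hφd, hIoo] with t hds hdφ htI
    set x : ℝ := (inner ℝ (s t) e : ℝ) with hx
    have hst : ‖s t‖ = 1 := hs1 t (Set.Ioo_subset_Icc_self htI)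
    have hxle : |x| ≤ 1 := by
      calc |x| ≤ ‖s t‖ * ‖e‖ := abs_real_inner_le_norm _ _
        _ = 1 := by rw [hst, he, mul_one]
    -- derivative of the inner product
    have hf : HasDerivAt (fun τ => (inner ℝ (s τ) e : ℝ)) ((inner ℝ (ds t) e : ℝ)) t := by
      have := (hds.inner ℝ (hasDerivAt_const t e))
      simpa using this
    -- orthogonality : ⟪s t, ds t⟫ = 0
    have horth : (inner ℝ (s t) (ds t) : ℝ) = 0 := by
      have hg : HasDerivAt (fun τ => (inner ℝ (s τ) (s τ) : ℝ))
          ((inner ℝ (s t) (ds t) : ℝ) + (inner ℝ (ds t) (s t) : ℝ)) t := hds.inner ℝ hds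
      have hconst : HasDerivAt (fun τ => (inner ℝ (s τ) (s τ) : ℝ)) 0 t := by
        have heq : (fun τ => (inner ℝ (s τ) (s τ) : ℝ)) =ᶠ[nhds t] fun _ => (1 : ℝ) := by
          filter_upwards [isOpen_Ioo.mem_nhds htI] with τ hτ
          have : ‖s τ‖ = 1 := hs1 τ (Set.Ioo_subset_Icc_self hτ)
          rw [real_inner_self_eq_norm_sq, this]; norm_num
        exact (hasDerivAt_const t (1:ℝ)).congr_of_eventuallyEq heq
      have h0 := hg.unique hconst
      have hcomm : (inner ℝ (ds t) (s t) : ℝ) = (inner ℝ (s t) (ds t) : ℝ) :=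
        real_inner_comm _ _
      linarith
    by_cases h1 : x = 1
    · have hmin : IsLocalMin (fun τ => Real.arccos (inner ℝ (s τ) e : ℝ)) t := by
        apply Filter.Eventually.of_forall
        intro τ
        simp only [← hx, h1, Real.arccos_one]
        exact Real.arccos_nonneg _
      rw [hmin.hasDerivAt_eq_zero hdφ]
      simpa using norm_nonneg (ds t)
    by_cases h2 : x = -1
    · have hmax : IsLocalMax (fun τ => Real.arccos (inner ℝ (s τ) e : ℝ)) t := by
        apply Filter.Eventually.of_forall
        intro τ
        simp only [← hx, h2, Real.arccos_neg_one]
        exact Real.arccos_le_pi _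
      rw [hmax.hasDerivAt_eq_zero hdφ]
      simpa using norm_nonneg (ds t)
    -- interior case
    have hcomp : HasDerivAt (fun τ => Real.arccos (inner ℝ (s τ) e : ℝ))
        (-(1 / Real.sqrt (1 - x ^ 2)) * (inner ℝ (ds t) e : ℝ)) t :=
      HasDerivAt.comp (h₂ := Real.arccos) (h := fun τ => (inner ℝ (s τ) e : ℝ)) t (Real.hasDerivAt_arccos h2 h1) hf
    have hxsq : x ^ 2 < 1 := by
      have := abs_lt.mp (lt_of_le_of_ne hxle (by
        intro h; rcases abs_eq (by norm_num : (0:ℝ) ≤ 1) |>.mp h with h | h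
        exacts [h1 h, h2 h]))
      nlinarith [this.1, this.2]
    have hsqpos : 0 < Real.sqrt (1 - x ^ 2) := Real.sqrt_pos.mpr (by linarith)
    have hval : dφ t = -(1 / Real.sqrt (1 - x ^ 2)) * (inner ℝ (ds t) e : ℝ) :=
      hdφ.unique hcomp
    -- bound |⟪ds t, e⟫| ≤ ‖ds t‖ √(1 - x²)
    have hnormsub : ‖e - x • s t‖ = Real.sqrt (1 - x ^ 2) := by
      rw [← Real.sqrt_sq (norm_nonneg (e - x • s t))]
      congr 1
      rw [← real_inner_self_eq_norm_sq]
      have h1' : (inner ℝ e e : ℝ) = 1 := by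
        rw [real_inner_self_eq_norm_sq, he]; norm_num
      have h2' : (inner ℝ (s t) (s t) : ℝ) = 1 := by
        rw [real_inner_self_eq_norm_sq, hst]; norm_num
      have h3' : (inner ℝ e (s t) : ℝ) = x := by rw [real_inner_comm]
      simp only [inner_sub_left, inner_sub_right, real_inner_smul_left, real_inner_smul_right,
        h1', h2', h3', ← hx]
      ring
    have hbound : |(inner ℝ (ds t) e : ℝ)| ≤ ‖ds t‖ * Real.sqrt (1 - x ^ 2) := by
      have : (inner ℝ (ds t) e : ℝ) = (inner ℝ (ds t) (e - x • s t) : ℝ) := by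
        have h0 : (inner ℝ (ds t) (s t) : ℝ) = 0 := by
          rw [real_inner_comm]; exact horth
        rw [inner_sub_right, real_inner_smul_right, h0]
        ring
      rw [this, ← hnormsub]
      exact abs_real_inner_le_norm _ _
    rw [hval, abs_mul, abs_neg, abs_of_pos (by positivity : (0:ℝ) < 1 / Real.sqrt (1 - x ^ 2))]
    rw [div_mul_eq_mul_div, one_mul, div_le_iff₀ hsqpos]
    linarith [hbound]
  refine ⟨key, lintegral_mono_ae ?_⟩
  filter_upwards [key, ae_restrict_mem measurableSet_Icc] with t hk htI
  set x : ℝ := (inner ℝ (s t) e : ℝ) with hx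
  have hxle : |x| ≤ 1 := by
    calc |x| ≤ ‖s t‖ * ‖e‖ := abs_real_inner_le_norm _ _
      _ = 1 := by rw [hs1 t htI, he, mul_one]
  have hxle' := abs_le.mp hxle
  rw [Real.cos_arccos hxle'.1 hxle'.2]
  apply ENNReal.ofReal_le_ofReal
  apply mul_le_mul_of_nonneg_left _ (hn0 x ⟨hxle'.1, hxle'.2⟩)
  apply Real.sqrt_le_sqrt
  have : dφ t ^ 2 ≤ ‖ds t‖ ^ 2 := sq_le_sq' (by linarith [(abs_le.mp hk).1]) (abs_le.mp hk).2
  nlinarith [sq_nonneg c, sq_nonneg (ρ t), mul_nonneg (sq_nonneg c) (sq_nonneg (ρ t))]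
end
end
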